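/- Let C be a CTMC, R ⊆ S × S, and s1 R s2 with some s1' ∈ post(s1) satisfying (s1',s2) ∉ R. Then s1 ≾_R s2 in C (weak simulation up to R in the continuous-time sense, including the rate condition K1·R(s1,S) ≤ K2·R(s2,S)) if and only if there exists γ with 0 < γ ≤ R(s2,S)/R(s1,S) such that γ is valid for the parametric network N(γ) built over the embedded DTMC, i.e., some flow on N(γ) saturates all edges 𝓈→u1 (u1 ∈ MU1 = post(s1)\R⁻¹(s2)) and all edges ū2→𝓉 (u2 ∈ MU2 = post(s2)\R(s1)). -/

import Mathlib

/-!
A weak simulation `(δ₁, δ₂, Δ)` and a flow on `N(γ)` carry the same data, with `γ = K₁ / K₂`: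
the flow sends `P(s₁,u)·δ₁(u)` into `u`, `K₁·Δ(u,v)` across `(u,v) ∈ R` and `γ·P(s₂,v)·δ₂(v)`
out of `v̄`; conversely `δ₁`, `δ₂`, `Δ` are the flow's edge values normalised by their
capacities and by `K₁`. Condition (1) forces `δᵢ = 1` on the states outside the relation, which
is saturation of the edges at `MU1` and `MU2`, and the rate condition becomes
`γ ≤ R(s₂,S)/R(s₁,S)`. The visible step of `s₁` makes `K₁` positive, and then the rate condition
makes `K₂` positive, so that `γ` is well defined.
-/

open Finset
open scoped Classical ENNReal

/-- Vertices of the bipartite network `N(μ, μ', R)`: a source `src`, a sink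
`snk`, left copies `lft s` of states and right copies `rgt t` of states. -/
abbrev Vert (S : Type*) := (Bool × S) ⊕ Bool

variable {S : Type*} [Fintype S]

def src {S : Type*} : Vert S := Sum.inr false
def snk {S : Type*} : Vert S := Sum.inr true
def lft {S : Type*} (s : S) : Vert S := Sum.inl (false, s)
def rgt {S : Type*} (t : S) : Vert S := Sum.inl (true, t)

/-- Capacities of `N(μ, μ', R)`: `μ(s)` on `src → lft s`, `μ'(t)` on
`rgt t → snk`, infinite capacity on `lft s → rgt t` whenever `(s,t) ∈ R`,
and `0` (no edge) otherwise. -/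
noncomputable def cap (μ μ' : S → ℝ) (R : Set (S × S)) : Vert S → Vert S → ℝ≥0∞ :=
  fun v w =>
    match v, w with
    | Sum.inr false, Sum.inl (false, s) => ENNReal.ofReal (μ s)
    | Sum.inl (true, t), Sum.inr true => ENNReal.ofReal (μ' t)
    | Sum.inl (false, s), Sum.inl (true, t) => if (s, t) ∈ R then ⊤ else 0
    | _, _ => 0

/-- `f` is a flow on the network with capacities `c`: capacity constraints,
antisymmetry, and conservation at every internal vertex. -/
def IsFlow (c : Vert S → Vert S → ℝ≥0∞) (f : Vert S → Vert S → ℝ) : Prop :=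
  (∀ v w, ENNReal.ofReal (f v w) ≤ c v w) ∧
  (∀ v w, f v w = - f w v) ∧
  (∀ v : Vert S, v ≠ src → v ≠ snk → (∑ u, f u v) = 0)

/-- The value of a flow: the net outflow of the source. -/
def flowValue (f : Vert S → Vert S → ℝ) : ℝ := ∑ w, f src w

variable {AP : Type*}

/-- The embedded DTMC of a CTMC with rate matrix `Q`. -/
noncomputable def emb (Q : S → S → ℝ) (s u : S) : ℝ :=
  if 0 < ∑ v, Q s v then Q s u / ∑ v, Q s v else 0

/-- `s₂` weakly simulates `s₁` up to `R` in the CTMC with rate matrix `Q`: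
Conditions (1) and (2) of the DTMC definition for the embedded chain plus the
rate condition `K₁·Q(s₁,S) ≤ K₂·Q(s₂,S)`. -/
def CWeakSimUpTo (Q : S → S → ℝ) (L : S → Set AP) (R : Set (S × S))
    (s₁ s₂ : S) : Prop :=
  L s₁ = L s₂ ∧
  ∃ δ₁ δ₂ : S → ℝ,
    (∀ u, 0 ≤ δ₁ u ∧ δ₁ u ≤ 1) ∧ (∀ u, 0 ≤ δ₂ u ∧ δ₂ u ≤ 1) ∧
    -- (1) stutter steps respect the relation
    (∀ v, 0 < emb Q s₁ v → δ₁ v < 1 → (v, s₂) ∈ R) ∧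
    (∀ v, 0 < emb Q s₂ v → δ₂ v < 1 → (s₁, v) ∈ R) ∧
    -- (2) weight function condition on the visible parts
    (∃ Δ : S → S → ℝ,
      (∀ u v, 0 ≤ Δ u v ∧ Δ u v ≤ 1) ∧
      (∀ u v, 0 < Δ u v →
        (0 < emb Q s₁ u ∧ 0 < δ₁ u) ∧ (0 < emb Q s₂ v ∧ 0 < δ₂ v) ∧ (u, v) ∈ R) ∧
      (0 < (∑ u, δ₁ u * emb Q s₁ u) → 0 < (∑ u, δ₂ u * emb Q s₂ u) →
        ∀ w, (∑ u, δ₁ u * emb Q s₁ u) * (∑ v, Δ w v) = emb Q s₁ w * δ₁ w ∧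
             (∑ u, δ₂ u * emb Q s₂ u) * (∑ v, Δ v w) = emb Q s₂ w * δ₂ w)) ∧
    -- (3') rate condition
    (∑ u, δ₁ u * emb Q s₁ u) * (∑ v, Q s₁ v) ≤
      (∑ u, δ₂ u * emb Q s₂ u) * (∑ v, Q s₂ v)

section Fraction

variable {α : Type*} [Field α] [LinearOrder α] {x m : α}

lemma div_mem_Icc_zero_one [IsStrictOrderedRing α] (h : x ∈ Set.Icc 0 m) : x / m ∈ Set.Icc 0 1 :=
  ⟨div_nonneg h.1 (h.1.trans h.2), div_le_one_of_le₀ h.2 (h.1.trans h.2)⟩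

lemma div_mul_cancel_of_mem_Icc (h : x ∈ Set.Icc 0 m) : x / m * m = x :=
  div_mul_cancel_of_imp fun hm => le_antisymm (hm ▸ h.2) h.1

end Fraction

lemma sum_vert (g : Vert S → ℝ) :
    ∑ v, g v = ∑ s, g (lft s) + ∑ t, g (rgt t) + g src + g snk := by
  rw [Fintype.sum_sum_type, Fintype.sum_prod_type, Fintype.sum_bool, Fintype.sum_bool]
  simp only [lft, rgt, src, snk]
  ring

def bipartiteFlow (a : S → ℝ) (B : S → S → ℝ) (c : S → ℝ) : Vert S → Vert S → ℝ
  | Sum.inr false, Sum.inl (false, s) => a s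
  | Sum.inl (false, s), Sum.inr false => -a s
  | Sum.inl (false, s), Sum.inl (true, t) => B s t
  | Sum.inl (true, t), Sum.inl (false, s) => -B s t
  | Sum.inl (true, t), Sum.inr true => c t
  | Sum.inr true, Sum.inl (true, t) => -c t
  | _, _ => 0

section BipartiteFlow

variable {a c μ μ' : S → ℝ} {B : S → S → ℝ} {R : Set (S × S)}

lemma isFlow_bipartiteFlow (ha : ∀ s, 0 ≤ a s) (hB : ∀ s t, 0 ≤ B s t) (hc : ∀ t, 0 ≤ c t)
    (haμ : ∀ s, a s ≤ μ s) (hcμ : ∀ t, c t ≤ μ' t) (hBR : ∀ s t, 0 < B s t → (s, t) ∈ R)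
    (hrow : ∀ s, a s = ∑ t, B s t) (hcol : ∀ t, c t = ∑ s, B s t) :
    IsFlow (cap μ μ' R) (bipartiteFlow a B c) := by
  refine ⟨?_, ?_, ?_⟩
  · rintro (⟨_ | _, s⟩ | _ | _) (⟨_ | _, t⟩ | _ | _) <;>
      simp [bipartiteFlow, cap, ENNReal.ofReal_le_ofReal, ha, hB, hc, haμ, hcμ]
    split_ifs with h
    · exact le_top
    · simp [(hB s t).antisymm' (not_lt.1 (mt (hBR s t) h))]
  · rintro (⟨_ | _, s⟩ | _ | _) (⟨_ | _, t⟩ | _ | _) <;> simp [bipartiteFlow]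
  · rintro (⟨_ | _, s⟩ | _ | _) hsrc hsnk
    · rw [sum_vert]
      simp [bipartiteFlow, lft, rgt, src, snk, hrow]
    · rw [sum_vert]
      simp [bipartiteFlow, lft, rgt, src, snk, hcol]
    · exact absurd rfl hsrc
    · exact absurd rfl hsnk

end BipartiteFlow

namespace IsFlow

variable {c : Vert S → Vert S → ℝ≥0∞} {f : Vert S → Vert S → ℝ} {v w : Vert S}

lemma nonneg_of_cap_eq_zero (hf : IsFlow c f) (h : c w v = 0) : 0 ≤ f v w := by
  have := hf.1 w v
  rw [h, nonpos_iff_eq_zero, ENNReal.ofReal_eq_zero, ← neg_nonneg, ← hf.2.1] at this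
  exact this

lemma eq_zero_of_cap_eq_zero (hf : IsFlow c f) (hvw : c v w = 0) (hwv : c w v = 0) :
    f v w = 0 := by
  have := hf.1 v w
  rw [hvw, nonpos_iff_eq_zero, ENNReal.ofReal_eq_zero] at this
  exact this.antisymm (hf.nonneg_of_cap_eq_zero hwv)

lemma le_of_cap_eq_ofReal {m : ℝ} (hf : IsFlow c f) (hm : 0 ≤ m)
    (h : c v w = ENNReal.ofReal m) : f v w ≤ m :=
  (ENNReal.ofReal_le_ofReal_iff hm).1 (h ▸ hf.1 v w)

variable {μ μ' : S → ℝ} {R : Set (S × S)}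

lemma src_lft_mem_Icc (hf : IsFlow (cap μ μ' R) f) {u : S} (hμ : 0 ≤ μ u) :
    f src (lft u) ∈ Set.Icc 0 (μ u) :=
  ⟨hf.nonneg_of_cap_eq_zero rfl, hf.le_of_cap_eq_ofReal hμ rfl⟩

lemma rgt_snk_mem_Icc (hf : IsFlow (cap μ μ' R) f) {v : S} (hμ' : 0 ≤ μ' v) :
    f (rgt v) snk ∈ Set.Icc 0 (μ' v) :=
  ⟨hf.nonneg_of_cap_eq_zero rfl, hf.le_of_cap_eq_ofReal hμ' rfl⟩

lemma lft_rgt_nonneg (hf : IsFlow (cap μ μ' R) f) (u v : S) : 0 ≤ f (lft u) (rgt v) :=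
  hf.nonneg_of_cap_eq_zero rfl

lemma mem_of_lft_rgt_pos (hf : IsFlow (cap μ μ' R) f) {u v : S} (h : 0 < f (lft u) (rgt v)) :
    (u, v) ∈ R := by
  by_contra huv
  exact (hf.le_of_cap_eq_ofReal le_rfl (by simp [cap, lft, rgt, huv])).not_gt h

lemma src_lft_eq_sum (hf : IsFlow (cap μ μ' R) f) (u : S) :
    f src (lft u) = ∑ v, f (lft u) (rgt v) := by
  have h := hf.2.2 (lft u) (by simp [lft, src]) (by simp [lft, snk])
  rw [sum_vert, Finset.sum_eq_zero fun s _ => hf.eq_zero_of_cap_eq_zero rfl rfl,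
    hf.eq_zero_of_cap_eq_zero (v := snk) rfl rfl] at h
  simp only [hf.2.1 (rgt _), Finset.sum_neg_distrib] at h
  linarith

lemma rgt_snk_eq_sum (hf : IsFlow (cap μ μ' R) f) (v : S) :
    f (rgt v) snk = ∑ u, f (lft u) (rgt v) := by
  have h := hf.2.2 (rgt v) (by simp [rgt, src]) (by simp [rgt, snk])
  rw [sum_vert, Finset.sum_eq_zero (s := Finset.univ) (f := fun t => f (rgt t) (rgt v))
    fun t _ => hf.eq_zero_of_cap_eq_zero rfl rfl,
    hf.eq_zero_of_cap_eq_zero (v := src) rfl rfl, hf.2.1 snk] at h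
  linarith

lemma sum_src_lft_eq_sum_rgt_snk (hf : IsFlow (cap μ μ' R) f) :
    ∑ u, f src (lft u) = ∑ v, f (rgt v) snk := by
  simp only [hf.src_lft_eq_sum, hf.rgt_snk_eq_sum]
  exact Finset.sum_comm

lemma lft_rgt_le_src_lft (hf : IsFlow (cap μ μ' R) f) (u v : S) :
    f (lft u) (rgt v) ≤ f src (lft u) :=
  hf.src_lft_eq_sum u ▸ Finset.single_le_sum (fun t _ => hf.lft_rgt_nonneg u t) (Finset.mem_univ v)

lemma lft_rgt_le_rgt_snk (hf : IsFlow (cap μ μ' R) f) (u v : S) :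
    f (lft u) (rgt v) ≤ f (rgt v) snk :=
  hf.rgt_snk_eq_sum v ▸ Finset.single_le_sum (fun s _ => hf.lft_rgt_nonneg s v) (Finset.mem_univ u)

end IsFlow

section EmbeddedChain

variable {Q : S → S → ℝ} {s : S}

lemma emb_nonneg (hQ : ∀ u, 0 ≤ Q s u) (u : S) : 0 ≤ emb Q s u := by
  unfold emb
  split_ifs with h
  exacts [div_nonneg (hQ u) h.le, le_rfl]

lemma emb_pos_iff (hQ : ∀ u, 0 ≤ Q s u) {u : S} : 0 < emb Q s u ↔ 0 < Q s u := by
  by_cases hE : 0 < ∑ v, Q s v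
  · simp [emb, hE, div_pos_iff_of_pos_right]
  · simp only [emb, if_neg hE, lt_self_iff_false, false_iff]
    exact fun hu => hE (Finset.sum_pos' (fun v _ => hQ v) ⟨u, Finset.mem_univ u, hu⟩)

end EmbeddedChain

def IsValidGamma (Q : S → S → ℝ) (R : Set (S × S)) (s₁ s₂ : S) (γ : ℝ) : Prop :=
  ∃ f, IsFlow (cap (emb Q s₁) (fun u => γ * emb Q s₂ u) R) f ∧
    (∀ u, 0 < Q s₁ u → (u, s₂) ∉ R → f src (lft u) = emb Q s₁ u) ∧
    (∀ u, 0 < Q s₂ u → (s₁, u) ∉ R → f (rgt u) snk = γ * emb Q s₂ u)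

section WeakSimulation

variable {Q : S → S → ℝ} {L : S → Set AP} {R : Set (S × S)} {s₁ s₂ : S}

theorem CWeakSimUpTo.exists_isValidGamma (hQ : ∀ s u, 0 ≤ Q s u)
    (hvis₁ : ∃ u, 0 < Q s₁ u ∧ (u, s₂) ∉ R) (hsim : CWeakSimUpTo Q L R s₁ s₂) :
    ∃ γ : ℝ, 0 < γ ∧ γ ≤ (∑ v, Q s₂ v) / (∑ v, Q s₁ v) ∧ IsValidGamma Q R s₁ s₂ γ := by
  obtain ⟨u₀, hu₀, hu₀R⟩ := hvis₁
  obtain ⟨-, δ₁, δ₂, hδ₁, hδ₂, hst₁, hst₂, ⟨Δ, hΔ, hΔR, hΔsum⟩, hrate⟩ := hsim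
  set K₁ := ∑ u, δ₁ u * emb Q s₁ u
  set K₂ := ∑ u, δ₂ u * emb Q s₂ u
  have sat₁ (u) (hu : 0 < Q s₁ u) (huR : (u, s₂) ∉ R) : δ₁ u = 1 :=
    (hδ₁ u).2.antisymm (not_lt.1 fun h => huR (hst₁ u ((emb_pos_iff (hQ s₁)).2 hu) h))
  have sat₂ (u) (hu : 0 < Q s₂ u) (huR : (s₁, u) ∉ R) : δ₂ u = 1 :=
    (hδ₂ u).2.antisymm (not_lt.1 fun h => huR (hst₂ u ((emb_pos_iff (hQ s₂)).2 hu) h))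
  have hE₁ : 0 < ∑ v, Q s₁ v :=
    Finset.sum_pos' (fun v _ => hQ s₁ v) ⟨u₀, Finset.mem_univ u₀, hu₀⟩
  have hK₁ : 0 < K₁ := Finset.sum_pos' (fun u _ => mul_nonneg (hδ₁ u).1 (emb_nonneg (hQ s₁) u))
    ⟨u₀, Finset.mem_univ u₀, by simpa [sat₁ u₀ hu₀ hu₀R] using (emb_pos_iff (hQ s₁)).2 hu₀⟩
  have hK₂ : 0 < K₂ := pos_of_mul_pos_left ((mul_pos hK₁ hE₁).trans_le hrate)
    (Finset.sum_nonneg fun v _ => hQ s₂ v)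
  have hγ : K₁ / K₂ ≤ (∑ v, Q s₂ v) / (∑ v, Q s₁ v) := by
    rw [div_le_div_iff₀ hK₂ hE₁]
    linarith
  refine ⟨K₁ / K₂, div_pos hK₁ hK₂, hγ, bipartiteFlow (fun u => emb Q s₁ u * δ₁ u)
    (fun u v => K₁ * Δ u v) (fun v => K₁ / K₂ * (emb Q s₂ v * δ₂ v)), ?_,
    fun u hu huR => by simp [bipartiteFlow, src, lft, sat₁ u hu huR],
    fun u hu huR => by simp [bipartiteFlow, rgt, snk, sat₂ u hu huR]⟩
  refine isFlow_bipartiteFlow (fun u => mul_nonneg (emb_nonneg (hQ s₁) u) (hδ₁ u).1)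
    (fun u v => mul_nonneg hK₁.le (hΔ u v).1)
    (fun v => mul_nonneg (div_pos hK₁ hK₂).le (mul_nonneg (emb_nonneg (hQ s₂) v) (hδ₂ v).1))
    (fun u => mul_le_of_le_one_right (emb_nonneg (hQ s₁) u) (hδ₁ u).2)
    (fun v => mul_le_mul_of_nonneg_left
      (mul_le_of_le_one_right (emb_nonneg (hQ s₂) v) (hδ₂ v).2) (div_pos hK₁ hK₂).le)
    (fun u v h => (hΔR u v (pos_of_mul_pos_right h hK₁.le)).2.2)
    (fun u => by rw [← Finset.mul_sum]; exact (hΔsum hK₁ hK₂ u).1.symm) (fun v => ?_)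
  rw [← Finset.mul_sum, ← (hΔsum hK₁ hK₂ v).2]
  field_simp

theorem CWeakSimUpTo.of_isValidGamma (hQ : ∀ s u, 0 ≤ Q s u) (hL : L s₁ = L s₂)
    (hvis₁ : ∃ u, 0 < Q s₁ u ∧ (u, s₂) ∉ R) {γ : ℝ} (hγ : 0 < γ)
    (hγE : γ ≤ (∑ v, Q s₂ v) / (∑ v, Q s₁ v)) (hvalid : IsValidGamma Q R s₁ s₂ γ) :
    CWeakSimUpTo Q L R s₁ s₂ := by
  obtain ⟨u₀, hu₀, hu₀R⟩ := hvis₁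
  obtain ⟨f, hf, sat₁, sat₂⟩ := hvalid
  have hsrc (u) : f src (lft u) ∈ Set.Icc 0 (emb Q s₁ u) :=
    hf.src_lft_mem_Icc (emb_nonneg (hQ s₁) u)
  have hsnk (v) : f (rgt v) snk ∈ Set.Icc 0 (γ * emb Q s₂ v) :=
    hf.rgt_snk_mem_Icc (mul_nonneg hγ.le (emb_nonneg (hQ s₂) v))
  -- Off `post(sᵢ)` the flow vanishes, and `δᵢ = 0 / 0 = 0` there is harmless.
  set δ₁ := fun u => f src (lft u) / emb Q s₁ u
  set δ₂ := fun v => f (rgt v) snk / (γ * emb Q s₂ v)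
  set K₁ := ∑ u, δ₁ u * emb Q s₁ u
  set K₂ := ∑ v, δ₂ v * emb Q s₂ v
  have hδ₁ (u) : δ₁ u * emb Q s₁ u = f src (lft u) := div_mul_cancel_of_mem_Icc (hsrc u)
  have hδ₂ (v) : γ * (δ₂ v * emb Q s₂ v) = f (rgt v) snk :=
    (mul_left_comm _ _ _).trans (div_mul_cancel_of_mem_Icc (hsnk v))
  have hK₁f : K₁ = ∑ u, f src (lft u) := Finset.sum_congr rfl fun u _ => hδ₁ u
  have hK : K₁ = γ * K₂ := by
    rw [hK₁f, hf.sum_src_lft_eq_sum_rgt_snk, Finset.mul_sum]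
    exact Finset.sum_congr rfl fun v _ => (hδ₂ v).symm
  have hK₁ : 0 < K₁ := hK₁f ▸ Finset.sum_pos' (fun u _ => (hsrc u).1)
    ⟨u₀, Finset.mem_univ u₀, sat₁ u₀ hu₀ hu₀R ▸ (emb_pos_iff (hQ s₁)).2 hu₀⟩
  have hK₂ : 0 < K₂ := pos_of_mul_pos_right (hK ▸ hK₁) hγ.le
  refine ⟨hL, δ₁, δ₂, fun u => div_mem_Icc_zero_one (hsrc u),
    fun v => div_mem_Icc_zero_one (hsnk v), fun v hv hlt => ?_, fun v hv hlt => ?_,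
    ⟨fun u v => f (lft u) (rgt v) / K₁, fun u v => ?_, fun u v h => ?_, fun _ _ w => ?_⟩, ?_⟩
  · by_contra hvR
    simp [δ₁, sat₁ v ((emb_pos_iff (hQ s₁)).1 hv) hvR, hv.ne'] at hlt
  · by_contra hvR
    simp [δ₂, sat₂ v ((emb_pos_iff (hQ s₂)).1 hv) hvR, hv.ne', hγ.ne'] at hlt
  · refine div_mem_Icc_zero_one ⟨hf.lft_rgt_nonneg u v, (hf.lft_rgt_le_src_lft u v).trans ?_⟩
    exact hK₁f ▸ Finset.single_le_sum (fun t _ => (hsrc t).1) (Finset.mem_univ u)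
  · have huv : 0 < f (lft u) (rgt v) := (div_pos_iff_of_pos_right hK₁).1 h
    have hu := huv.trans_le (hf.lft_rgt_le_src_lft u v)
    have hv := huv.trans_le (hf.lft_rgt_le_rgt_snk u v)
    have he₁ := hu.trans_le (hsrc u).2
    have he₂ := pos_of_mul_pos_right (hv.trans_le (hsnk v).2) hγ.le
    exact ⟨⟨he₁, div_pos hu he₁⟩, ⟨he₂, div_pos hv (mul_pos hγ he₂)⟩, hf.mem_of_lft_rgt_pos huv⟩
  · show K₁ * _ = _ ∧ K₂ * _ = _
    rw [← Finset.sum_div, ← Finset.sum_div, ← hf.src_lft_eq_sum, ← hf.rgt_snk_eq_sum, ← hδ₁,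
      ← hδ₂, hK]
    constructor <;> field_simp
  · have hE₁ : 0 < ∑ v, Q s₁ v :=
      Finset.sum_pos' (fun v _ => hQ s₁ v) ⟨u₀, Finset.mem_univ u₀, hu₀⟩
    show K₁ * _ ≤ K₂ * _
    rw [hK, mul_right_comm, mul_comm K₂]
    exact mul_le_mul_of_nonneg_right ((le_div_iff₀ hE₁).1 hγE) hK₂.le

end WeakSimulation

theorem ctmc_weakSimUpTo_iff_valid_gamma_general (Q : S → S → ℝ) (L : S → Set AP)
    (hQ0 : ∀ s u, 0 ≤ Q s u)
    (R : Set (S × S)) (s₁ s₂ : S) (hL : L s₁ = L s₂)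
    (hvis₁ : ∃ u, 0 < Q s₁ u ∧ (u, s₂) ∉ R) :
    CWeakSimUpTo Q L R s₁ s₂ ↔
    ∃ γ : ℝ, 0 < γ ∧ γ ≤ (∑ v, Q s₂ v) / (∑ v, Q s₁ v) ∧
      ∃ f, IsFlow (cap (emb Q s₁) (fun u => γ * emb Q s₂ u) R) f ∧
        (∀ u, 0 < Q s₁ u → (u, s₂) ∉ R → f src (lft u) = emb Q s₁ u) ∧
        (∀ u, 0 < Q s₂ u → (s₁, u) ∉ R → f (rgt u) snk = γ * emb Q s₂ u) :=
  ⟨CWeakSimUpTo.exists_isValidGamma hQ0 hvis₁,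
    fun ⟨_, hγ, hγE, hvalid⟩ => CWeakSimUpTo.of_isValidGamma hQ0 hL hvis₁ hγ hγE hvalid⟩

/-- for a CTMC, if `s₁ R s₂` and `s₁` has a visible step, then
`s₁ ≾_R s₂` iff there is `0 < γ ≤ Q(s₂,S)/Q(s₁,S)` valid for the parametric
network `N(γ)` over the embedded DTMC, i.e. some flow on `N(γ)` saturates all
source edges into `MU1 = post(s₁) \ R⁻¹(s₂)` and all sink edges from
`MU2 = post(s₂) \ R(s₁)`. -/
theorem ctmc_weakSimUpTo_iff_valid_gamma (Q : S → S → ℝ) (L : S → Set AP)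
    (hQ0 : ∀ s u, 0 ≤ Q s u)
    (R : Set (S × S)) (s₁ s₂ : S) (hR : (s₁, s₂) ∈ R) (hL : L s₁ = L s₂)
    (hvis₁ : ∃ u, 0 < Q s₁ u ∧ (u, s₂) ∉ R) :
    CWeakSimUpTo Q L R s₁ s₂ ↔
    ∃ γ : ℝ, 0 < γ ∧ γ ≤ (∑ v, Q s₂ v) / (∑ v, Q s₁ v) ∧
      ∃ f, IsFlow (cap (emb Q s₁) (fun u => γ * emb Q s₂ u) R) f ∧
        (∀ u, 0 < Q s₁ u → (u, s₂) ∉ R → f src (lft u) = emb Q s₁ u) ∧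
        (∀ u, 0 < Q s₂ u → (s₁, u) ∉ R → f (rgt u) snk = γ * emb Q s₂ u) :=
  ctmc_weakSimUpTo_iff_valid_gamma_general Q L hQ0 R s₁ s₂ hL hvis₁
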